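/- arXiv:2410.07974 — 2 statements merged into one kernel-verified Lean document; each statement's English description precedes it below -/
import Mathlib

section
/- Let q_t(x) = N(x | μ_t, Σ_t) be a time-dependent Gaussian density on ℝⁿ with differentiable mean path μ_t and differentiable, invertible covariance path Σ_t. Then the vector field u°_t(x) = dμ_t/dt + (1/2)(dΣ_t/dt)Σ_t^{-1}(x − μ_t) satisfies the continuity equation ∂q_t/∂t + div(q_t u°_t) = 0 pointwise. -/
open Matrix

/-- The multivariate Gaussian density `N(x | μ, Σ)`. -/
noncomputable def gaussDensity {n : ℕ} (μ : Fin n → ℝ)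
    (S : Matrix (Fin n) (Fin n) ℝ) (x : Fin n → ℝ) : ℝ :=
  (2 * Real.pi) ^ (-(n : ℝ) / 2) * S.det ^ (-(1 : ℝ) / 2) *
    Real.exp (-(1 / 2) * ((x - μ) ⬝ᵥ (S⁻¹ *ᵥ (x - μ))))

/-- `det` as a continuous multilinear map in the rows. -/
noncomputable def detCM (n : ℕ) :
    ContinuousMultilinearMap ℝ (fun _ : Fin n => (Fin n → ℝ)) ℝ :=
  MultilinearMap.mkContinuous
    (Matrix.detRowAlternating : _ [⋀^Fin n]→ₗ[ℝ] ℝ).toMultilinearMap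
    (n.factorial) (by
      intro m
      have h1 : Matrix.detRowAlternating (R := ℝ) (n := Fin n) m = Matrix.det (Matrix.of m) := rfl
      rw [AlternatingMap.coe_multilinearMap]
      rw [h1, Matrix.det_apply]
      calc ‖∑ σ : Equiv.Perm (Fin n), Equiv.Perm.sign σ • ∏ i, Matrix.of m (σ i) i‖
          ≤ ∑ σ : Equiv.Perm (Fin n), ‖Equiv.Perm.sign σ • ∏ i, Matrix.of m (σ i) i‖ :=
            norm_sum_le _ _
        _ ≤ ∑ _σ : Equiv.Perm (Fin n), ∏ i, ‖m i‖ := by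
            refine Finset.sum_le_sum fun σ _ => ?_
            have h2 : ‖Equiv.Perm.sign σ • ∏ i, Matrix.of m (σ i) i‖
                = ‖∏ i, Matrix.of m (σ i) i‖ := by
              rcases Int.units_eq_one_or (Equiv.Perm.sign σ) with h | h <;>
                simp [h, Units.smul_def]
            rw [h2]
            have h3 : ‖∏ i, Matrix.of m (σ i) i‖ ≤ ∏ i, ‖m (σ i)‖ := by
              rw [norm_prod]
              exact Finset.prod_le_prod (fun i _ => norm_nonneg _)
                (fun i _ => norm_le_pi_norm (m (σ i)) i)
            calc ‖∏ i, Matrix.of m (σ i) i‖ ≤ ∏ i, ‖m (σ i)‖ := h3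
              _ = ∏ i, ‖m i‖ := Equiv.prod_comp σ (fun i => ‖m i‖)
        _ = (n.factorial : ℝ) * ∏ i, ‖m i‖ := by
            rw [Finset.sum_const, Finset.card_univ, Fintype.card_perm, Fintype.card_fin,
              nsmul_eq_mul]
      )

lemma detCM_apply {n : ℕ} (p : Fin n → Fin n → ℝ) :
    detCM n p = Matrix.det (Matrix.of p) := rfl

/-- Derivative of `det` along a path of matrices. -/
lemma hasDerivAt_det {n : ℕ} {M : ℝ → Matrix (Fin n) (Fin n) ℝ}
    {M' : Matrix (Fin n) (Fin n) ℝ} {t : ℝ}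
    (h : ∀ i j, HasDerivAt (fun τ => M τ i j) (M' i j) t) :
    HasDerivAt (fun τ => (M τ).det)
      (∑ i, ((M t).updateRow i (M' i)).det) t := by
  have hM : HasDerivAt (fun τ => (fun i j => M τ i j : Fin n → Fin n → ℝ))
      (fun i j => M' i j) t :=
    hasDerivAt_pi.2 fun i => hasDerivAt_pi.2 fun j => h i j
  have H := ((detCM n).hasFDerivAt (fun i j => M t i j)).comp_hasDerivAt t hM
  have hfun : (⇑(detCM n) ∘ fun τ i j => M τ i j) = fun τ => (M τ).det := rfl
  rw [hfun] at H
  have hval : ((detCM n).linearDeriv (fun i j => M t i j)) (fun i j => M' i j)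
      = ∑ i, ((M t).updateRow i (M' i)).det := by
    rw [ContinuousMultilinearMap.linearDeriv_apply]
    rfl
  rwa [hval] at H

lemma det_updateRow_eq_sum {n : ℕ} (A : Matrix (Fin n) (Fin n) ℝ) (i : Fin n) (v : Fin n → ℝ) :
    (A.updateRow i v).det = ∑ j, v j * A.adjugate j i := by
  have hv : v = ∑ j, v j • (Pi.single j 1 : Fin n → ℝ) := by
    ext k
    simp [Pi.single_apply]
  have f := (Matrix.detRowAlternating (R := ℝ) (n := Fin n)).toMultilinearMap
  calc (A.updateRow i v).det
      = (Matrix.detRowAlternating (R := ℝ) (n := Fin n)).toMultilinearMap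
          (Function.update A i (∑ j, v j • (Pi.single j 1 : Fin n → ℝ))) := by
        rw [← hv]; rfl
    _ = ∑ j, (Matrix.detRowAlternating (R := ℝ) (n := Fin n)).toMultilinearMap
          (Function.update A i (v j • (Pi.single j 1 : Fin n → ℝ))) :=
        MultilinearMap.map_update_sum _ _ _ _ A
    _ = ∑ j, v j * A.adjugate j i := by
        refine Finset.sum_congr rfl fun j _ => ?_
        refine (MultilinearMap.map_update_smul _ (A : Fin n → Fin n → ℝ) i (v j) _).trans ?_
        rw [smul_eq_mul]
        congr 1
        rw [Matrix.adjugate_apply]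
        rfl

/-- Derivative of inverse along a path of positive definite matrices. -/
lemma hasDerivAt_inv_entry {n : ℕ} {S S' : ℝ → Matrix (Fin n) (Fin n) ℝ} {t : ℝ}
    (hS' : ∀ t i j, HasDerivAt (fun τ => S τ i j) (S' t i j) t)
    (hSpd : ∀ τ, (S τ).PosDef) (i j : Fin n) :
    HasDerivAt (fun τ => (S τ)⁻¹ i j) ((-((S t)⁻¹ * S' t * (S t)⁻¹)) i j) t := by
  have hdet_ne : ∀ τ, (S τ).det ≠ 0 := fun τ => (hSpd τ).det_pos.ne'
  have hunit : ∀ τ, IsUnit (S τ).det := fun τ => isUnit_iff_ne_zero.2 (hdet_ne τ)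
  -- entries of the inverse are differentiable
  have hdiff : ∀ a b, DifferentiableAt ℝ (fun τ => (S τ)⁻¹ a b) t := by
    intro a b
    have hinv_eq : (fun τ => (S τ)⁻¹ a b)
        = fun τ => ((S τ).det)⁻¹ * (S τ).adjugate a b := by
      funext τ
      rw [Matrix.inv_def, Matrix.smul_apply, smul_eq_mul, Ring.inverse_eq_inv']
    rw [hinv_eq]
    have hdet : HasDerivAt (fun τ => (S τ).det)
        (∑ k, ((S t).updateRow k (S' t k)).det) t := hasDerivAt_det (fun i j => hS' t i j)
    have hadj : DifferentiableAt ℝ (fun τ => (S τ).adjugate a b) t := by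
      have hfun : (fun τ => (S τ).adjugate a b)
          = fun τ => ((S τ).updateRow b (Pi.single a 1)).det := by
        funext τ; rw [Matrix.adjugate_apply]
      rw [hfun]
      have hN : ∀ c d', HasDerivAt (fun τ => ((S τ).updateRow b (Pi.single a 1)) c d')
          ((Matrix.of fun c d' => if c = b then (0 : ℝ) else S' t c d') c d') t := by
        intro c d'
        simp only [Matrix.updateRow_apply, Matrix.of_apply]
        by_cases h : c = b
        · simp only [h, if_true]
          exact hasDerivAt_const t _
        · simp only [h, if_false]
          exact hS' t c d'
      exact (hasDerivAt_det hN).differentiableAt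
    exact (hdet.differentiableAt.inv (hdet_ne t)).mul hadj
  set G : Matrix (Fin n) (Fin n) ℝ := (S t)⁻¹ with hG
  set Gd : Matrix (Fin n) (Fin n) ℝ :=
    Matrix.of (fun a b => deriv (fun τ => (S τ)⁻¹ a b) t) with hGdd
  have hG' : ∀ a b, HasDerivAt (fun τ => (S τ)⁻¹ a b) (Gd a b) t :=
    fun a b => (hdiff a b).hasDerivAt
  have hrel : S' t * G + S t * Gd = 0 := by
    ext c e
    have hfun : (fun τ => ∑ k, S τ c k * (S τ)⁻¹ k e)
        = fun τ => (1 : Matrix (Fin n) (Fin n) ℝ) c e := by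
      funext τ
      rw [← Matrix.mul_apply, Matrix.mul_nonsing_inv _ (hunit τ)]
    have h1 : HasDerivAt (fun τ => ∑ k, S τ c k * (S τ)⁻¹ k e)
        (∑ k, (S' t c k * (S t)⁻¹ k e + S t c k * Gd k e)) t :=
      HasDerivAt.fun_sum fun k _ => (hS' t c k).mul (hG' k e)
    rw [hfun] at h1
    have h0 : (∑ k, (S' t c k * (S t)⁻¹ k e + S t c k * Gd k e)) = 0 :=
      h1.unique (hasDerivAt_const t _)
    simpa [Matrix.add_apply, Matrix.mul_apply, Finset.sum_add_distrib, ← hG] using h0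
  have h2 : S t * Gd = -(S' t * G) := by
    rw [add_comm] at hrel
    exact eq_neg_of_add_eq_zero_left hrel
  have hGd_eq : Gd = -(G * S' t * G) := by
    calc Gd = 1 * Gd := (one_mul _).symm
      _ = (G * S t) * Gd := by rw [Matrix.nonsing_inv_mul _ (hunit t)]
      _ = G * (S t * Gd) := by rw [Matrix.mul_assoc]
      _ = G * (-(S' t * G)) := by rw [h2]
      _ = -(G * S' t * G) := by rw [Matrix.mul_neg, Matrix.mul_assoc]
  have := hG' i j
  rwa [hGd_eq] at this

lemma trace_identity {n : ℕ} (A A' : Matrix (Fin n) (Fin n) ℝ) (hd : A.det ≠ 0) :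
    ∑ i, (A.updateRow i (A' i)).det = A.det * ∑ i, (A' * A⁻¹) i i := by
  have hadj : ∀ a b, A.adjugate a b = A.det * A⁻¹ a b := by
    intro a b
    rw [Matrix.inv_def, Matrix.smul_apply, smul_eq_mul, Ring.inverse_eq_inv']
    rw [← mul_assoc, mul_inv_cancel₀ hd, one_mul]
  calc ∑ i, (A.updateRow i (A' i)).det
      = ∑ i, ∑ j, A' i j * A.adjugate j i :=
        Finset.sum_congr rfl fun i _ => det_updateRow_eq_sum A i (A' i)
    _ = ∑ i, ∑ j, A.det * (A' i j * A⁻¹ j i) := by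
        refine Finset.sum_congr rfl fun i _ => Finset.sum_congr rfl fun j _ => ?_
        rw [hadj]; ring
    _ = A.det * ∑ i, (A' * A⁻¹) i i := by
        rw [Finset.mul_sum]
        refine Finset.sum_congr rfl fun i _ => ?_
        rw [Matrix.mul_apply, Finset.mul_sum]

lemma grand {n : ℕ} (G A' : Matrix (Fin n) (Fin n) ℝ) (r m' : Fin n → ℝ)
    (hGsym : ∀ a b, G a b = G b a) :
    (-(1/2:ℝ)) * (∑ i, (A' * G) i i)
      + (-(1/2:ℝ)) * (∑ j, ((-(m' j)) * (∑ k, G j k * r k)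
          + r j * ∑ k, ((-(G * A' * G)) j k * r k + G j k * (-(m' k)))))
      + ∑ i, ((-(1/2:ℝ)) * (∑ j, ((if j = i then (1:ℝ) else 0) * (∑ k, G j k * r k)
            + r j * (∑ k, G j k * (if k = i then (1:ℝ) else 0))))
          * (m' i + (1/2:ℝ) * ∑ j, (A' * G) i j * r j)
          + (1/2:ℝ) * (∑ j, (A' * G) i j * (if j = i then (1:ℝ) else 0))) = 0 := by
  have hW : ∀ i : Fin n, (∑ j, ((if j = i then (1:ℝ) else 0) * (∑ k, G j k * r k)
      + r j * (∑ k, G j k * (if k = i then (1:ℝ) else 0))))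
      = 2 * ∑ k, G i k * r k := by
    intro i
    rw [Finset.sum_add_distrib]
    have e1 : ∑ j, (if j = i then (1:ℝ) else 0) * (∑ k, G j k * r k)
        = ∑ k, G i k * r k := by
      simp [ite_mul]
    have e2 : ∑ j, r j * (∑ k, G j k * (if k = i then (1:ℝ) else 0))
        = ∑ j, r j * G j i := by
      refine Finset.sum_congr rfl fun j _ => ?_
      congr 1
      simp [mul_ite]
    have e3 : ∑ j, r j * G j i = ∑ k, G i k * r k := by
      refine Finset.sum_congr rfl fun j _ => ?_
      rw [hGsym j i]; ring
    rw [e1, e2, e3]; ring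
  have hKd : ∀ i : Fin n, (∑ j, (A' * G) i j * (if j = i then (1:ℝ) else 0)) = (A' * G) i i := by
    intro i; simp [mul_ite]
  simp only [hW, hKd]
  -- abbreviate the basic sums
  have hQ : (∑ j, ((-(m' j)) * (∑ k, G j k * r k)
      + r j * ∑ k, ((-(G * A' * G)) j k * r k + G j k * (-(m' k)))))
      = (∑ j, (-(m' j)) * (∑ k, G j k * r k))
        + (∑ j, r j * (∑ k, (-(G * A' * G)) j k * r k))
        + ∑ j, r j * (∑ k, G j k * (-(m' k))) := by
    rw [← Finset.sum_add_distrib, ← Finset.sum_add_distrib]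
    refine Finset.sum_congr rfl fun j _ => ?_
    rw [Finset.sum_add_distrib, mul_add]
    ring
  rw [hQ]
  have e_q1 : (∑ j, (-(m' j)) * (∑ k, G j k * r k))
      = -∑ i, (∑ k, G i k * r k) * m' i := by
    rw [← Finset.sum_neg_distrib]
    exact Finset.sum_congr rfl fun j _ => by ring
  have e_q3 : (∑ j, r j * (∑ k, G j k * (-(m' k))))
      = -∑ i, (∑ k, G i k * r k) * m' i := by
    calc (∑ j, r j * (∑ k, G j k * (-(m' k))))
        = ∑ j, ∑ k, r j * (G j k * (-(m' k))) := by
          refine Finset.sum_congr rfl fun j _ => ?_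
          rw [Finset.mul_sum]
      _ = ∑ k, ∑ j, r j * (G j k * (-(m' k))) := Finset.sum_comm
      _ = -∑ i, (∑ k, G i k * r k) * m' i := by
          rw [← Finset.sum_neg_distrib]
          refine Finset.sum_congr rfl fun i _ => ?_
          calc ∑ j, r j * (G j i * (-(m' i)))
              = ∑ j, (G i j * r j) * (-(m' i)) :=
                Finset.sum_congr rfl fun j _ => by rw [hGsym j i]; ring
            _ = (∑ j, G i j * r j) * (-(m' i)) := (Finset.sum_mul _ _ _).symm
            _ = -((∑ k, G i k * r k) * m' i) := by ring
  have hB : ∑ j, r j * (∑ k, (G * A' * G) j k * r k)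
      = ∑ i, (∑ k, G i k * r k) * (∑ j, (A' * G) i j * r j) := by
    have h1 : ∀ j k, (G * A' * G) j k = ∑ a, G j a * (A' * G) a k := by
      intro j k; rw [Matrix.mul_assoc, Matrix.mul_apply]
    calc ∑ j, r j * (∑ k, (G * A' * G) j k * r k)
        = ∑ j, ∑ k, ∑ a, r j * (G j a * ((A' * G) a k * r k)) := by
          refine Finset.sum_congr rfl fun j _ => ?_
          rw [Finset.mul_sum]
          refine Finset.sum_congr rfl fun k _ => ?_
          rw [h1, Finset.sum_mul, Finset.mul_sum]
          refine Finset.sum_congr rfl fun a _ => ?_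
          ring
      _ = ∑ j, ∑ a, ∑ k, r j * (G j a * ((A' * G) a k * r k)) := by
          refine Finset.sum_congr rfl fun j _ => ?_
          exact Finset.sum_comm
      _ = ∑ a, ∑ j, ∑ k, r j * (G j a * ((A' * G) a k * r k)) := Finset.sum_comm
      _ = ∑ i, (∑ k, G i k * r k) * (∑ j, (A' * G) i j * r j) := by
          refine Finset.sum_congr rfl fun a _ => ?_
          rw [Finset.sum_mul_sum]
          refine Finset.sum_congr rfl fun j _ => ?_
          refine Finset.sum_congr rfl fun k _ => ?_
          rw [hGsym j a]; ring
  have e_q2 : (∑ j, r j * (∑ k, (-(G * A' * G)) j k * r k))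
      = -∑ i, (∑ k, G i k * r k) * (∑ j, (A' * G) i j * r j) := by
    rw [← hB, ← Finset.sum_neg_distrib]
    refine Finset.sum_congr rfl fun j _ => ?_
    have hneg : ∑ k, (-(G * A' * G)) j k * r k = -∑ k, (G * A' * G) j k * r k := by
      rw [← Finset.sum_neg_distrib]
      exact Finset.sum_congr rfl fun k _ => by rw [Matrix.neg_apply]; ring
    rw [hneg]; ring
  have hsplit : ∑ i, ((-(1/2:ℝ)) * (2 * ∑ k, G i k * r k)
        * (m' i + (1/2:ℝ) * ∑ j, (A' * G) i j * r j)
        + (1/2:ℝ) * (A' * G) i i)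
      = -(∑ i, (∑ k, G i k * r k) * m' i)
        + ((-(1/2:ℝ)) * (∑ i, (∑ k, G i k * r k) * (∑ j, (A' * G) i j * r j))
        + (1/2:ℝ) * ∑ i, (A' * G) i i) := by
    rw [← Finset.sum_neg_distrib, Finset.mul_sum, Finset.mul_sum, ← Finset.sum_add_distrib,
      ← Finset.sum_add_distrib]
    exact Finset.sum_congr rfl fun i _ => by ring
  rw [e_q1, e_q2, e_q3, hsplit]
  ring

/-- For a time-dependent Gaussian density `q_t = N(· | μ_t, Σ_t)` with differentiable
mean and differentiable positive-definite covariance, the vector field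
`u°_t(x) = dμ_t/dt + (1/2)(dΣ_t/dt)Σ_t⁻¹(x − μ_t)` satisfies the continuity equation
`∂q_t/∂t + div(q_t u°_t) = 0` pointwise.  The time derivative of `q` and the
partial derivatives of the flux `q u°` are supplied as data with `HasDerivAt`
hypotheses. -/
theorem gaussian_continuity_equation {n : ℕ}
    (μ : ℝ → Fin n → ℝ) (μ' : ℝ → Fin n → ℝ)
    (S S' : ℝ → Matrix (Fin n) (Fin n) ℝ)
    (hμ' : ∀ t, HasDerivAt μ (μ' t) t)
    (hS' : ∀ t i j, HasDerivAt (fun τ => S τ i j) (S' t i j) t)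
    (hSpd : ∀ t, (S t).PosDef)
    -- the Gaussian path and the candidate vector field
    (q : ℝ → (Fin n → ℝ) → ℝ)
    (hq : ∀ t x, q t x = gaussDensity (μ t) (S t) x)
    (u : ℝ → (Fin n → ℝ) → Fin n → ℝ)
    (hu : ∀ t x, u t x = μ' t + (1 / 2 : ℝ) • ((S' t * (S t)⁻¹) *ᵥ (x - μ t)))
    -- derivative data
    (dqt : ℝ → (Fin n → ℝ) → ℝ)
    (hdqt : ∀ t x, HasDerivAt (fun τ => q τ x) (dqt t x) t)
    (dflux : ℝ → (Fin n → ℝ) → Fin n → ℝ)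
    (hdflux : ∀ t x i,
      HasDerivAt
        (fun a => q t (Function.update x i a) * u t (Function.update x i a) i)
        (dflux t x i) (x i)) :
    ∀ t x, dqt t x + ∑ i, dflux t x i = 0 := by
  intro t x
  have hdet_ne : ∀ τ, (S τ).det ≠ 0 := fun τ => (hSpd τ).det_pos.ne'
  have hGherm : ((S t)⁻¹).IsHermitian := (hSpd t).1.inv
  have hGsym : ∀ a b, (S t)⁻¹ a b = (S t)⁻¹ b a := fun a b => by
    simpa using (hGherm.apply a b).symm
  have hμc : ∀ j, HasDerivAt (fun τ => μ τ j) (μ' t j) t := fun j => hasDerivAt_pi.1 (hμ' t) j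
  have hr : ∀ j, HasDerivAt (fun τ => x j - μ τ j) (-(μ' t j)) t := fun j => by
    exact (hμc j).const_sub (x j)
  have hGent : ∀ a b, HasDerivAt (fun τ => (S τ)⁻¹ a b)
      ((-((S t)⁻¹ * S' t * (S t)⁻¹)) a b) t := fun a b => hasDerivAt_inv_entry hS' hSpd a b
  -- time derivative of q
  have hquad : HasDerivAt
      (fun τ => ∑ j, (x j - μ τ j) * ∑ k, (S τ)⁻¹ j k * (x k - μ τ k))
      (∑ j, ((-(μ' t j)) * (∑ k, (S t)⁻¹ j k * (x k - μ t k))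
        + (x j - μ t j) * ∑ k, ((-((S t)⁻¹ * S' t * (S t)⁻¹)) j k * (x k - μ t k)
            + (S t)⁻¹ j k * (-(μ' t k))))) t :=
    HasDerivAt.fun_sum fun j _ => (hr j).mul
      (HasDerivAt.fun_sum fun k _ => (hGent j k).mul (hr k))
  have hexp := (HasDerivAt.const_mul (-(1/2 : ℝ)) hquad).exp
  have hdetd : HasDerivAt (fun τ => (S τ).det)
      (∑ i, ((S t).updateRow i (S' t i)).det) t := hasDerivAt_det fun i j => hS' t i j
  have hpow := hdetd.rpow_const (p := -(1:ℝ)/2) (Or.inl (hdet_ne t))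
  have hqt := (HasDerivAt.const_mul ((2 * Real.pi) ^ (-(n:ℝ)/2)) hpow).fun_mul hexp
  have hfun_q : (fun τ => (2 * Real.pi) ^ (-(n : ℝ) / 2) * (S τ).det ^ (-(1:ℝ)/2)
      * Real.exp (-(1/2 : ℝ) * ∑ j, (x j - μ τ j) * ∑ k, (S τ)⁻¹ j k * (x k - μ τ k)))
      = fun τ => q τ x := by
    funext τ
    rw [hq τ x]
    simp [gaussDensity, Matrix.mulVec, dotProduct]
  rw [hfun_q] at hqt
  have heq1 := (hdqt t x).unique hqt
  have hwj : ∀ i j, HasDerivAt (fun a => Function.update x i a j - μ t j)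
      (if j = i then (1:ℝ) else 0) (x i) := by
    intro i j
    by_cases h : j = i
    · subst h
      have hfn : (fun a => Function.update x j a j - μ t j) = fun a => a - μ t j := by
        funext a; rw [Function.update_self]
      rw [if_pos rfl, hfn]
      simpa using (hasDerivAt_id (x j)).sub_const (μ t j)
    · have hfn : (fun a => Function.update x i a j - μ t j) = fun _ => x j - μ t j := by
        funext a; rw [Function.update_of_ne h]
      rw [if_neg h, hfn]
      exact hasDerivAt_const _ _
  have heq2 : ∀ i : Fin n, dflux t x i =
      (2 * Real.pi) ^ (-(n:ℝ) / 2) * (S t).det ^ (-(1:ℝ) / 2) *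
          (Real.exp (-(1/2:ℝ) * ∑ j, (x j - μ t j) * ∑ k, (S t)⁻¹ j k * (x k - μ t k)) *
            (-(1/2:ℝ) * ∑ j, ((if j = i then (1:ℝ) else 0) * ∑ k, (S t)⁻¹ j k * (x k - μ t k) +
              (x j - μ t j) * ∑ k, (S t)⁻¹ j k * (if k = i then (1:ℝ) else 0)))) *
        (μ' t i + (1/2:ℝ) * ∑ j, (S' t * (S t)⁻¹) i j * (x j - μ t j)) +
      (2 * Real.pi) ^ (-(n:ℝ) / 2) * (S t).det ^ (-(1:ℝ) / 2) *
          Real.exp (-(1/2:ℝ) * ∑ j, (x j - μ t j) * ∑ k, (S t)⁻¹ j k * (x k - μ t k)) *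
        ((1/2:ℝ) * ∑ j, (S' t * (S t)⁻¹) i j * (if j = i then (1:ℝ) else 0)) := by
    intro i
    have hquadS : HasDerivAt
        (fun a => ∑ j, (Function.update x i a j - μ t j)
          * ∑ k, (S t)⁻¹ j k * (Function.update x i a k - μ t k))
        (∑ j, ((if j = i then (1:ℝ) else 0)
            * (∑ k, (S t)⁻¹ j k * (Function.update x i (x i) k - μ t k))
          + (Function.update x i (x i) j - μ t j)
            * ∑ k, ((S t)⁻¹ j k * (if k = i then (1:ℝ) else 0)))) (x i) :=
      HasDerivAt.fun_sum fun j _ => (hwj i j).mul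
        (HasDerivAt.fun_sum fun k _ => HasDerivAt.const_mul _ (hwj i k))
    have hexpS := (HasDerivAt.const_mul (-(1/2 : ℝ)) hquadS).exp
    have huS : HasDerivAt
        (fun a => μ' t i + (1/2:ℝ) * ∑ j, (S' t * (S t)⁻¹) i j * (Function.update x i a j - μ t j))
        ((1/2:ℝ) * ∑ j, (S' t * (S t)⁻¹) i j * (if j = i then (1:ℝ) else 0)) (x i) :=
      HasDerivAt.const_add (μ' t i)
        (HasDerivAt.const_mul ((1:ℝ)/2)
          (HasDerivAt.fun_sum fun j _ => HasDerivAt.const_mul _ (hwj i j)))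
    have hfl := (HasDerivAt.const_mul
      ((2 * Real.pi) ^ (-(n:ℝ)/2) * (S t).det ^ (-(1:ℝ)/2)) hexpS).fun_mul huS
    simp only [Function.update_eq_self] at hfl
    have hfun_f : (fun a => (2 * Real.pi) ^ (-(n:ℝ)/2) * (S t).det ^ (-(1:ℝ)/2)
        * Real.exp (-(1/2:ℝ) * ∑ j, (Function.update x i a j - μ t j)
            * ∑ k, (S t)⁻¹ j k * (Function.update x i a k - μ t k))
        * (μ' t i + (1/2:ℝ) * ∑ j, (S' t * (S t)⁻¹) i j * (Function.update x i a j - μ t j)))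
        = fun a => q t (Function.update x i a) * u t (Function.update x i a) i := by
      funext a
      rw [hq, hu]
      simp [gaussDensity, Matrix.mulVec, dotProduct]
    rw [hfun_f] at hfl
    exact (hdflux t x i).unique hfl
  -- final assembly
  have htr : ∑ i, ((S t).updateRow i (S' t i)).det
      = (S t).det * ∑ i, (S' t * (S t)⁻¹) i i :=
    trace_identity (S t) (S' t) (hdet_ne t)
  have hrpow : (S t).det ^ (-(1:ℝ)/2 - 1)
      = (S t).det ^ (-(1:ℝ)/2) * ((S t).det)⁻¹ := by
    rw [Real.rpow_sub (hSpd t).det_pos, Real.rpow_one, div_eq_mul_inv]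
  rw [heq1, htr, hrpow]
  have hsum2 : ∑ i, dflux t x i = ((2 * Real.pi) ^ (-(n:ℝ)/2) * (S t).det ^ (-(1:ℝ)/2)
      * Real.exp (-(1/2:ℝ) * ∑ j, (x j - μ t j) * ∑ k, (S t)⁻¹ j k * (x k - μ t k)))
      * ∑ i, ((-(1/2:ℝ)) * (∑ j, ((if j = i then (1:ℝ) else 0) * (∑ k, (S t)⁻¹ j k * (x k - μ t k))
            + (x j - μ t j) * (∑ k, (S t)⁻¹ j k * (if k = i then (1:ℝ) else 0))))
          * (μ' t i + (1/2:ℝ) * ∑ j, (S' t * (S t)⁻¹) i j * (x j - μ t j))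
          + (1/2:ℝ) * (∑ j, (S' t * (S t)⁻¹) i j * (if j = i then (1:ℝ) else 0))) := by
    rw [Finset.mul_sum]
    refine Finset.sum_congr rfl fun i _ => ?_
    rw [heq2 i]; ring
  rw [hsum2]
  have hgrand := grand (S t)⁻¹ (S' t) (fun j => x j - μ t j) (μ' t) hGsym
  beta_reduce at hgrand
  have hdd : (S t).det * ((S t).det)⁻¹ = 1 := mul_inv_cancel₀ (hdet_ne t)
  linear_combination ((2 * Real.pi) ^ (-(n:ℝ)/2) * (S t).det ^ (-(1:ℝ)/2)
      * Real.exp (-(1/2:ℝ) * ∑ j, (x j - μ t j) * ∑ k, (S t)⁻¹ j k * (x k - μ t k))) * hgrand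
    + ((2 * Real.pi) ^ (-(n:ℝ)/2) * (-(1/2:ℝ)) * (∑ i, (S' t * (S t)⁻¹) i i)
      * (S t).det ^ (-(1:ℝ)/2)
      * Real.exp (-(1/2:ℝ) * ∑ j, (x j - μ t j) * ∑ k, (S t)⁻¹ j k * (x k - μ t k))) * hdd
end

section
/- Let q_t(x) = N(x | μ_t, Σ_t) be a time-dependent Gaussian density on ℝⁿ with differentiable μ_t and differentiable invertible Σ_t, and let G_t be a symmetric matrix. Then the vector field u_t(x) = dμ_t/dt + [(1/2)(dΣ_t/dt)Σ_t^{-1} − G_t Σ_t^{-1}](x − μ_t) satisfies the Fokker–Planck equation ∂q_t/∂t = −div(q_t u_t) + Σ_{ij} (G_t)_{ij} ∂²q_t/∂x_i∂x_j pointwise. -/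
open Matrix

lemma det_path {n : ℕ} {M : ℝ → Matrix (Fin n) (Fin n) ℝ}
    {M' : Matrix (Fin n) (Fin n) ℝ} {t : ℝ}
    (h : ∀ i j, HasDerivAt (fun τ => M τ i j) (M' i j) t) :
    HasDerivAt (fun τ => (M τ).det)
      (∑ j, ((M t).updateCol j (fun k => M' k j)).det) t := by
  have h1 : HasDerivAt
      (fun τ => ∑ σ : Equiv.Perm (Fin n), (Equiv.Perm.sign σ : ℝ) * ∏ i, M τ (σ i) i)
      (∑ σ : Equiv.Perm (Fin n), (Equiv.Perm.sign σ : ℝ) *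
        ∑ i, (∏ j ∈ Finset.univ.erase i, M t (σ j) j) * M' (σ i) i) t := by
    apply HasDerivAt.fun_sum
    intro σ _
    have hp := HasDerivAt.finset_prod (u := (Finset.univ : Finset (Fin n)))
      (f := fun i τ => M τ (σ i) i) (f' := fun i => M' (σ i) i) (x := t)
      (fun i _ => h (σ i) i)
    simpa [smul_eq_mul] using hp.const_mul ((Equiv.Perm.sign σ : ℝ))
  have h2 : (fun τ => (M τ).det)
      = fun τ => ∑ σ : Equiv.Perm (Fin n), (Equiv.Perm.sign σ : ℝ) * ∏ i, M τ (σ i) i :=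
    funext fun τ => Matrix.det_apply' _
  rw [h2]
  convert h1 using 1
  have h3 : ∀ (j : Fin n) (σ : Equiv.Perm (Fin n)),
      (∏ i, ((M t).updateCol j (fun k => M' k j)) (σ i) i)
      = M' (σ j) j * ∏ i ∈ Finset.univ.erase j, M t (σ i) i := by
    intro j σ
    rw [← Finset.mul_prod_erase Finset.univ _ (Finset.mem_univ j)]
    congr 1
    · simp [Matrix.updateCol_apply]
    · exact Finset.prod_congr rfl (fun i hi => by
        simp [Matrix.updateCol_apply, Finset.ne_of_mem_erase hi])
  simp_rw [Matrix.det_apply', h3]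
  rw [Finset.sum_comm]
  exact Finset.sum_congr rfl fun σ _ => by rw [Finset.mul_sum]; exact Finset.sum_congr rfl fun j _ => by ring

lemma sum_det_updateColumn {n : ℕ} (A B : Matrix (Fin n) (Fin n) ℝ) :
    (∑ j, (A.updateCol j (fun k => B k j)).det) = (A.adjugate * B).trace := by
  simp_rw [← Matrix.cramer_apply, Matrix.cramer_eq_adjugate_mulVec]
  simp [Matrix.trace, Matrix.diag, Matrix.mul_apply, Matrix.mulVec, dotProduct]

lemma det_hasDerivAt {n : ℕ} {S : ℝ → Matrix (Fin n) (Fin n) ℝ}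
    {S' : Matrix (Fin n) (Fin n) ℝ} {t : ℝ}
    (h : ∀ i j, HasDerivAt (fun τ => S τ i j) (S' i j) t)
    (hdet : (S t).det ≠ 0) :
    HasDerivAt (fun τ => (S τ).det) ((S t).det * ((S t)⁻¹ * S').trace) t := by
  have h1 := det_path h
  rw [sum_det_updateColumn] at h1
  convert h1 using 1
  have : (S t).adjugate = (S t).det • (S t)⁻¹ := by
    rw [Matrix.inv_def, Ring.inverse_eq_inv', smul_smul, mul_inv_cancel₀ hdet, one_smul]
  rw [this, Matrix.smul_mul, Matrix.trace_smul, smul_eq_mul]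

lemma inv_hasDerivAt {n : ℕ} {S : ℝ → Matrix (Fin n) (Fin n) ℝ}
    {S' : Matrix (Fin n) (Fin n) ℝ} {t : ℝ}
    (h : ∀ i j, HasDerivAt (fun τ => S τ i j) (S' i j) t)
    (hdet : ∀ τ, (S τ).det ≠ 0) :
    ∀ i j, HasDerivAt (fun τ => (S τ)⁻¹ i j)
      ((-((S t)⁻¹ * S' * (S t)⁻¹)) i j) t := by
  -- existence of some derivative for the entries of the inverse
  have hex : ∀ i j, ∃ d, HasDerivAt (fun τ => (S τ)⁻¹ i j) d t := by
    intro i j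
    have hadj : ∃ d, HasDerivAt (fun τ => (S τ).adjugate i j) d t := by
      have hent : ∀ a b, HasDerivAt
          (fun τ => ((S τ).updateRow j (Pi.single i 1)) a b)
          ((S'.updateRow j 0) a b) t := by
        intro a b
        by_cases hab : a = j
        · subst hab; simpa [Matrix.updateRow_apply] using hasDerivAt_const t _
        · simpa [Matrix.updateRow_apply, hab] using h a b
      have HD := det_path (M := fun τ => (S τ).updateRow j (Pi.single i 1))
        (M' := S'.updateRow j 0) hent
      have hfun : (fun τ => (S τ).adjugate i j)
          = fun τ => ((S τ).updateRow j (Pi.single i 1)).det := by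
        funext τ; rw [Matrix.adjugate_apply]
      rw [hfun]
      exact ⟨_, HD⟩
    obtain ⟨d₁, hd₁⟩ := hadj
    have hdetD : ∃ d₀, HasDerivAt (fun τ => (S τ).det) d₀ t :=
      ⟨_, det_path h⟩
    obtain ⟨d₀, hd₀⟩ := hdetD
    refine ⟨((-d₀) / ((S t).det)^2) * (S t).adjugate i j + ((S t).det)⁻¹ * d₁, ?_⟩
    have heq : (fun τ => (S τ)⁻¹ i j)
        = fun τ => ((S τ).det)⁻¹ * (S τ).adjugate i j := by
      funext τ
      rw [Matrix.inv_def, Ring.inverse_eq_inv']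
      simp [Matrix.smul_apply]
    rw [heq]
    exact (hd₀.inv (hdet t)).mul hd₁
  choose d hd using hex
  have hmat : Matrix.of d = -((S t)⁻¹ * S' * (S t)⁻¹) := by
    have hzero : ∀ i j, (S' * (S t)⁻¹ + S t * Matrix.of d) i j = 0 := by
      intro i j
      have hprod : HasDerivAt (fun τ => ∑ k, S τ i k * (S τ)⁻¹ k j)
          (∑ k, (S' i k * (S t)⁻¹ k j + S t i k * d k j)) t :=
        HasDerivAt.fun_sum fun k _ => (h i k).fun_mul (hd k j)
      have hconst : (fun τ => ∑ k, S τ i k * (S τ)⁻¹ k j)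
          = fun _ => (1 : Matrix (Fin n) (Fin n) ℝ) i j := by
        funext τ
        have := Matrix.mul_nonsing_inv (S τ) (isUnit_iff_ne_zero.2 (hdet τ))
        calc ∑ k, S τ i k * (S τ)⁻¹ k j = (S τ * (S τ)⁻¹) i j := by
              rw [Matrix.mul_apply]
          _ = (1 : Matrix (Fin n) (Fin n) ℝ) i j := by rw [this]
      have h0 : HasDerivAt (fun τ => ∑ k, S τ i k * (S τ)⁻¹ k j) 0 t := by
        rw [hconst]; exact hasDerivAt_const t _
      have := h0.unique hprod
      simp only [Matrix.add_apply, Matrix.mul_apply, Matrix.of_apply]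
      rw [← Finset.sum_add_distrib]
      exact this.symm
    have hsum : S' * (S t)⁻¹ + S t * Matrix.of d = 0 := by
      ext i j; exact hzero i j
    have hSd : S t * Matrix.of d = -(S' * (S t)⁻¹) := by
      linear_combination (norm := module) hsum
    calc Matrix.of d = ((S t)⁻¹ * S t) * Matrix.of d := by
          rw [Matrix.nonsing_inv_mul _ (isUnit_iff_ne_zero.2 (hdet t)), Matrix.one_mul]
      _ = (S t)⁻¹ * (S t * Matrix.of d) := by rw [Matrix.mul_assoc]
      _ = -((S t)⁻¹ * (S' * (S t)⁻¹)) := by rw [hSd, Matrix.mul_neg]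
      _ = -((S t)⁻¹ * S' * (S t)⁻¹) := by rw [Matrix.mul_assoc]
  intro i j
  have : d i j = (-((S t)⁻¹ * S' * (S t)⁻¹)) i j := by
    rw [← hmat]; rfl
  rw [← this]; exact hd i j

lemma update_coord {n : ℕ} (x : Fin n → ℝ) (i k : Fin n) (c : ℝ) :
    HasDerivAt (fun a => Function.update x i a k - c) (if k = i then 1 else 0) (x i) := by
  by_cases h : k = i
  · subst h
    simpa [Function.update_self] using (hasDerivAt_id (x k)).sub_const c
  · simpa [Function.update_apply, h] using hasDerivAt_const (x i) (x k - c)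

lemma mulVec_update {n : ℕ} (B : Matrix (Fin n) (Fin n) ℝ) (m x : Fin n → ℝ) (i k : Fin n) :
    HasDerivAt (fun a => (B *ᵥ (Function.update x k a - m)) i) (B i k) (x k) := by
  have h := HasDerivAt.fun_sum (u := Finset.univ)
    (fun l _ => (update_coord x k l (m l)).const_mul (B i l))
  have hfun : (fun a => ∑ l, B i l * (Function.update x k a l - m l))
      = fun a => (B *ᵥ (Function.update x k a - m)) i := by
    funext a; simp [Matrix.mulVec, dotProduct]
  rw [hfun] at h
  refine h.congr_deriv ?_
  symm
  simp [mul_ite, mul_one, mul_zero]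

lemma quad_update {n : ℕ} (P : Matrix (Fin n) (Fin n) ℝ) (hP : Pᵀ = P)
    (m x : Fin n → ℝ) (i : Fin n) :
    HasDerivAt (fun a => (Function.update x i a - m) ⬝ᵥ (P *ᵥ (Function.update x i a - m)))
      (2 * (P *ᵥ (x - m)) i) (x i) := by
  have hterm : ∀ k : Fin n, HasDerivAt
      (fun a => (Function.update x i a k - m k) * ∑ l, P k l * (Function.update x i a l - m l))
      ((if k = i then 1 else 0) * ∑ l, P k l * (x l - m l)
        + (x k - m k) * ∑ l, P k l * (if l = i then 1 else 0)) (x i) := by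
    intro k
    have h1 := update_coord x i k (m k)
    have h2 := HasDerivAt.fun_sum (u := Finset.univ)
      (fun l _ => (update_coord x i l (m l)).const_mul (P k l))
    have := h1.fun_mul h2
    simpa [Function.update_self] using this
  have hsum := HasDerivAt.fun_sum (u := Finset.univ) (fun k _ => hterm k)
  have hfun : (fun a => ∑ k, (Function.update x i a k - m k) *
        ∑ l, P k l * (Function.update x i a l - m l))
      = fun a => (Function.update x i a - m) ⬝ᵥ (P *ᵥ (Function.update x i a - m)) := by
    funext a; simp [Matrix.mulVec, dotProduct]
  rw [hfun] at hsum
  refine hsum.congr_deriv ?_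
  symm
  have hsymm : ∀ k l, P k l = P l k := fun k l => by
    conv_lhs => rw [← hP]
    rfl
  simp only [ite_mul, one_mul, zero_mul, mul_ite, mul_one, mul_zero,
    Finset.sum_ite_eq', Finset.mem_univ, if_true, Finset.sum_add_distrib]
  have h2 : ∑ k, (x k - m k) * P k i = ∑ k, P i k * (x k - m k) :=
    Finset.sum_congr rfl fun k _ => by rw [hsymm k i, mul_comm]
  rw [h2]
  simp only [Matrix.mulVec, dotProduct, Pi.sub_apply]
  ring

lemma gauss_update {n : ℕ} (m : Fin n → ℝ) (Sm : Matrix (Fin n) (Fin n) ℝ)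
    (hP : (Sm⁻¹)ᵀ = Sm⁻¹) (x : Fin n → ℝ) (i : Fin n) :
    HasDerivAt (fun a => gaussDensity m Sm (Function.update x i a))
      (gaussDensity m Sm x * (-((Sm⁻¹ *ᵥ (x - m)) i))) (x i) := by
  have hq := quad_update Sm⁻¹ hP m x i
  have he := ((hq.const_mul (-(1/2 : ℝ))).exp).const_mul
    ((2 * Real.pi) ^ (-(n : ℝ) / 2) * Sm.det ^ (-(1 : ℝ) / 2))
  have hfun : (fun a => (2 * Real.pi) ^ (-(n : ℝ) / 2) * Sm.det ^ (-(1 : ℝ) / 2) *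
        Real.exp (-(1/2 : ℝ) * ((Function.update x i a - m) ⬝ᵥ (Sm⁻¹ *ᵥ (Function.update x i a - m)))))
      = fun a => gaussDensity m Sm (Function.update x i a) := by
    funext a; rw [gaussDensity]
  rw [hfun] at he
  simp only [Function.update_eq_self] at he
  refine he.congr_deriv ?_
  symm
  simp only [gaussDensity]
  ring

lemma quad_time {n : ℕ} {m : ℝ → Fin n → ℝ} {m' : Fin n → ℝ}
    {S : ℝ → Matrix (Fin n) (Fin n) ℝ} {S' : Matrix (Fin n) (Fin n) ℝ} {t : ℝ}
    (x : Fin n → ℝ)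
    (hm : HasDerivAt m m' t)
    (hS : ∀ i j, HasDerivAt (fun τ => S τ i j) (S' i j) t)
    (hdet : ∀ τ, (S τ).det ≠ 0)
    (hP : ((S t)⁻¹)ᵀ = (S t)⁻¹) :
    HasDerivAt (fun τ => (x - m τ) ⬝ᵥ ((S τ)⁻¹ *ᵥ (x - m τ)))
      (-(2 * (m' ⬝ᵥ ((S t)⁻¹ *ᵥ (x - m t))))
        - ((S t)⁻¹ *ᵥ (x - m t)) ⬝ᵥ (S' *ᵥ ((S t)⁻¹ *ᵥ (x - m t)))) t := by
  have hmk : ∀ k, HasDerivAt (fun τ => m τ k) (m' k) t := fun k => hasDerivAt_pi.1 hm k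
  have hinv := inv_hasDerivAt hS hdet
  have hterm : ∀ k : Fin n, HasDerivAt
      (fun τ => (x k - m τ k) * ∑ l, (S τ)⁻¹ k l * (x l - m τ l))
      ((0 - m' k) * ∑ l, (S t)⁻¹ k l * (x l - m t l)
        + (x k - m t k) * ∑ l, ((-((S t)⁻¹ * S' * (S t)⁻¹)) k l * (x l - m t l)
            + (S t)⁻¹ k l * (0 - m' l))) t := by
    intro k
    exact ((hasDerivAt_const t (x k)).sub (hmk k)).fun_mul
      (HasDerivAt.fun_sum fun l _ => (hinv k l).fun_mul ((hasDerivAt_const t (x l)).sub (hmk l)))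
  have hsum := HasDerivAt.fun_sum (u := Finset.univ) (fun k _ => hterm k)
  have hfun : (fun τ => ∑ k, (x k - m τ k) * ∑ l, (S τ)⁻¹ k l * (x l - m τ l))
      = fun τ => (x - m τ) ⬝ᵥ ((S τ)⁻¹ *ᵥ (x - m τ)) := by
    funext τ; simp [Matrix.mulVec, dotProduct]
  rw [hfun] at hsum
  refine hsum.congr_deriv ?_
  symm
  -- identify the derivative
  set y := x - m t with hy
  set v := (S t)⁻¹ *ᵥ y with hv
  have hsplit : ∀ k : Fin n,
      (0 - m' k) * ∑ l, (S t)⁻¹ k l * (x l - m t l)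
        + (x k - m t k) * ∑ l, ((-((S t)⁻¹ * S' * (S t)⁻¹)) k l * (x l - m t l)
            + (S t)⁻¹ k l * (0 - m' l))
      = (0 - m') k * v k
        + y k * (((-((S t)⁻¹ * S' * (S t)⁻¹)) *ᵥ y) k + ((S t)⁻¹ *ᵥ (0 - m')) k) := by
    intro k
    rw [Finset.sum_add_distrib]
    simp [Matrix.mulVec, dotProduct, hy, hv]
  rw [Finset.sum_congr rfl (fun k _ => hsplit k)]
  have : (∑ k, ((0 - m') k * v k
        + y k * (((-((S t)⁻¹ * S' * (S t)⁻¹)) *ᵥ y) k + ((S t)⁻¹ *ᵥ (0 - m')) k)))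
      = (0 - m') ⬝ᵥ v + y ⬝ᵥ ((-((S t)⁻¹ * S' * (S t)⁻¹)) *ᵥ y + (S t)⁻¹ *ᵥ (0 - m')) := by
    rw [Finset.sum_add_distrib]; rfl
  rw [this]
  have hyP : ∀ w : Fin n → ℝ, y ⬝ᵥ ((S t)⁻¹ *ᵥ w) = v ⬝ᵥ w := by
    intro w
    rw [Matrix.dotProduct_mulVec, hv]
    congr 1
    conv_lhs => rw [← hP]
    rw [Matrix.vecMul_transpose]
  rw [zero_sub, Matrix.neg_mulVec, Matrix.mulVec_neg, neg_dotProduct,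
    dotProduct_add, dotProduct_neg, ← Matrix.mulVec_mulVec,
    ← Matrix.mulVec_mulVec, hyP]
  rw [← hv, dotProduct_neg, hyP, dotProduct_comm v m']
  ring

lemma gauss_time {n : ℕ} {m : ℝ → Fin n → ℝ} {m' : Fin n → ℝ}
    {S : ℝ → Matrix (Fin n) (Fin n) ℝ} {S' : Matrix (Fin n) (Fin n) ℝ} {t : ℝ}
    (x : Fin n → ℝ)
    (hm : HasDerivAt m m' t)
    (hS : ∀ i j, HasDerivAt (fun τ => S τ i j) (S' i j) t)
    (hdet : ∀ τ, (S τ).det ≠ 0)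
    (hP : ((S t)⁻¹)ᵀ = (S t)⁻¹) :
    HasDerivAt (fun τ => gaussDensity (m τ) (S τ) x)
      (gaussDensity (m t) (S t) x *
        (-(1/2 : ℝ) * ((S t)⁻¹ * S').trace + m' ⬝ᵥ ((S t)⁻¹ *ᵥ (x - m t))
          + (1/2 : ℝ) * (((S t)⁻¹ *ᵥ (x - m t)) ⬝ᵥ (S' *ᵥ ((S t)⁻¹ *ᵥ (x - m t)))))) t := by
  have hd := det_hasDerivAt hS (hdet t)
  have hr := hd.rpow_const (p := (-(1:ℝ)/2)) (Or.inl (hdet t))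
  have hq := quad_time x hm hS hdet hP
  have he := (hq.const_mul (-(1/2 : ℝ))).exp
  have hprod := (hr.fun_mul he).const_mul ((2 * Real.pi) ^ (-(n : ℝ) / 2))
  have hfun : (fun τ => (2 * Real.pi) ^ (-(n : ℝ) / 2) *
        ((S τ).det ^ (-(1:ℝ)/2) *
          Real.exp (-(1/2 : ℝ) * ((x - m τ) ⬝ᵥ ((S τ)⁻¹ *ᵥ (x - m τ))))))
      = fun τ => gaussDensity (m τ) (S τ) x := by
    funext τ; rw [gaussDensity]; ring
  rw [hfun] at hprod
  refine hprod.congr_deriv ?_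
  symm
  have hw : (S t).det * (S t).det ^ (-(1:ℝ)/2 - 1) = (S t).det ^ (-(1:ℝ)/2) := by
    rw [Real.rpow_sub_one (hdet t), mul_comm, div_mul_cancel₀ _ (hdet t)]
  rw [gaussDensity]
  linear_combination ((2 * Real.pi) ^ (-(n : ℝ) / 2) *
    Real.exp (-(1/2 : ℝ) * ((x - m t) ⬝ᵥ ((S t)⁻¹ *ᵥ (x - m t)))) * ((1:ℝ)/2) *
    ((S t)⁻¹ * S').trace) * hw

/-- For a time-dependent Gaussian density `q_t = N(· | μ_t, Σ_t)` with differentiable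
mean and differentiable positive-definite covariance, and a symmetric matrix `G_t`,
the vector field `u_t(x) = dμ_t/dt + [(1/2)(dΣ_t/dt)Σ_t⁻¹ − G_t Σ_t⁻¹](x − μ_t)`
satisfies the Fokker–Planck equation
`∂q_t/∂t = −div(q_t u_t) + Σ_{ij} (G_t)_{ij} ∂²q_t/∂x_i∂x_j` pointwise.
All derivatives are supplied as data with `HasDerivAt` hypotheses. -/
theorem gaussian_fokker_planck {n : ℕ}
    (μ : ℝ → Fin n → ℝ) (μ' : ℝ → Fin n → ℝ)
    (S S' : ℝ → Matrix (Fin n) (Fin n) ℝ)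
    (G : ℝ → Matrix (Fin n) (Fin n) ℝ)
    (hμ' : ∀ t, HasDerivAt μ (μ' t) t)
    (hS' : ∀ t i j, HasDerivAt (fun τ => S τ i j) (S' t i j) t)
    (hSpd : ∀ t, (S t).PosDef)
    (hGsym : ∀ t, (G t).IsSymm)
    -- the Gaussian path and the candidate vector field
    (q : ℝ → (Fin n → ℝ) → ℝ)
    (hq : ∀ t x, q t x = gaussDensity (μ t) (S t) x)
    (u : ℝ → (Fin n → ℝ) → Fin n → ℝ)
    (hu : ∀ t x, u t x
      = μ' t + (((1 / 2 : ℝ) • (S' t * (S t)⁻¹) - G t * (S t)⁻¹) *ᵥ (x - μ t)))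
    -- derivative data
    (dqt : ℝ → (Fin n → ℝ) → ℝ)
    (hdqt : ∀ t x, HasDerivAt (fun τ => q τ x) (dqt t x) t)
    (dflux : ℝ → (Fin n → ℝ) → Fin n → ℝ)
    (hdflux : ∀ t x i,
      HasDerivAt
        (fun a => q t (Function.update x i a) * u t (Function.update x i a) i)
        (dflux t x i) (x i))
    (dqx : ℝ → (Fin n → ℝ) → Fin n → ℝ)
    (hdqx : ∀ t x i,
      HasDerivAt (fun a => q t (Function.update x i a)) (dqx t x i) (x i))
    (dqxx : ℝ → (Fin n → ℝ) → Fin n → Fin n → ℝ)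
    (hdqxx : ∀ t x i j,
      HasDerivAt (fun a => dqx t (Function.update x j a) i) (dqxx t x i j) (x j)) :
    ∀ t x, dqt t x = -(∑ i, dflux t x i) + ∑ i, ∑ j, G t i j * dqxx t x i j := by
  intro t x
  have hdet : ∀ τ, (S τ).det ≠ 0 := fun τ => (hSpd τ).det_pos.ne'
  have hsymS : (S t)ᵀ = S t := by
    have h := (hSpd t).isHermitian
    rw [Matrix.IsHermitian] at h
    simpa using h
  have hP : ((S t)⁻¹)ᵀ = (S t)⁻¹ := by
    rw [Matrix.transpose_nonsing_inv, hsymS]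
  set P := (S t)⁻¹ with hPdef
  set y := x - μ t with hy
  set v := P *ᵥ y with hv
  set A := (1/2 : ℝ) • (S' t * P) - G t * P with hA
  set Q := gaussDensity (μ t) (S t) x with hQ
  have hPe : ∀ a b, P a b = P b a := fun a b => by
    conv_lhs => rw [← hP]
    rfl
  -- u pointwise
  have hui : ∀ z i, u t z i = μ' t i + (A *ᵥ (z - μ t)) i := by
    intro z i
    rw [hu t z]
    rfl
  -- time derivative value
  have e1 : dqt t x = Q * (-(1/2 : ℝ) * (P * S' t).trace + μ' t ⬝ᵥ v
      + (1/2 : ℝ) * (v ⬝ᵥ (S' t *ᵥ v))) := by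
    have h1 := gauss_time x (hμ' t) (fun i j => hS' t i j) hdet hP
    have hfun : (fun τ => q τ x) = fun τ => gaussDensity (μ τ) (S τ) x :=
      funext fun τ => hq τ x
    exact (hdqt t x).unique (by rw [hfun]; exact h1)
  -- first space derivative, at every point
  have e2 : ∀ z i, dqx t z i = q t z * (-((P *ᵥ (z - μ t)) i)) := by
    intro z i
    have h1 := gauss_update (μ t) (S t) hP z i
    have hfun : (fun a => q t (Function.update z i a))
        = fun a => gaussDensity (μ t) (S t) (Function.update z i a) :=
      funext fun a => hq t _
    refine (hdqx t z i).unique ?_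
    rw [hfun, hq t z]
    exact h1
  -- second space derivatives
  have e3 : ∀ i j, dqxx t x i j = Q * -(v j) * -(v i) + Q * -(P i j) := by
    intro i j
    have hg := gauss_update (μ t) (S t) hP x j
    have hl := (mulVec_update P (μ t) x i j).fun_neg
    have hprod := hg.fun_mul hl
    have hfun : (fun a => dqx t (Function.update x j a) i)
        = fun a => gaussDensity (μ t) (S t) (Function.update x j a) *
            (-((P *ᵥ (Function.update x j a - μ t)) i)) := by
      funext a
      rw [e2 (Function.update x j a) i, hq t]
    refine (hdqxx t x i j).unique ?_
    rw [hfun]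
    simpa [Function.update_eq_self] using hprod
  -- flux derivatives
  have e4 : ∀ i, dflux t x i
      = Q * -(v i) * (μ' t i + (A *ᵥ y) i) + Q * (A i i) := by
    intro i
    have hg := gauss_update (μ t) (S t) hP x i
    have hl := (mulVec_update A (μ t) x i i).const_add (μ' t i)
    have hprod := hg.fun_mul hl
    have hfun : (fun a => q t (Function.update x i a) * u t (Function.update x i a) i)
        = fun a => gaussDensity (μ t) (S t) (Function.update x i a) *
            (μ' t i + (A *ᵥ (Function.update x i a - μ t)) i) := by
      funext a
      rw [hq t, hui]
    refine (hdflux t x i).unique ?_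
    rw [hfun]
    simpa [Function.update_eq_self] using hprod
  -- sum of flux derivatives
  have hS1 : ∑ i, dflux t x i
      = -(Q * (v ⬝ᵥ μ' t)) - Q * (v ⬝ᵥ (A *ᵥ y)) + Q * A.trace := by
    rw [Finset.sum_congr rfl (fun i _ => e4 i)]
    have hstep : ∀ i : Fin n, Q * -(v i) * (μ' t i + (A *ᵥ y) i) + Q * (A i i)
        = -(Q * (v i * μ' t i)) + (-(Q * (v i * (A *ᵥ y) i)) + Q * A i i) :=
      fun i => by ring
    rw [Finset.sum_congr rfl (fun i _ => hstep i), Finset.sum_add_distrib,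
      Finset.sum_add_distrib, Finset.sum_neg_distrib, Finset.sum_neg_distrib,
      ← Finset.mul_sum, ← Finset.mul_sum, ← Finset.mul_sum]
    have h1 : v ⬝ᵥ μ' t = ∑ i, v i * μ' t i := rfl
    have h2 : v ⬝ᵥ (A *ᵥ y) = ∑ i, v i * (A *ᵥ y) i := rfl
    have h3 : A.trace = ∑ i, A i i := rfl
    rw [h1, h2, h3]
    ring
  -- diffusion sum
  have hS2 : ∑ i, ∑ j, G t i j * dqxx t x i j
      = Q * (v ⬝ᵥ (G t *ᵥ v)) - Q * (G t * P).trace := by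
    have hstep : ∀ i j : Fin n, G t i j * (Q * -(v j) * -(v i) + Q * -(P i j))
        = Q * (v i * (G t i j * v j)) - Q * (G t i j * P i j) := fun i j => by ring
    rw [Finset.sum_congr rfl (fun i _ => by
      rw [Finset.sum_congr rfl (fun j _ => by rw [e3 i j, hstep i j]),
        Finset.sum_sub_distrib, ← Finset.mul_sum, ← Finset.mul_sum])]
    rw [Finset.sum_sub_distrib]
    simp only [← Finset.mul_sum]
    have h1 : v ⬝ᵥ (G t *ᵥ v) = ∑ i, v i * ∑ j, G t i j * v j := rfl
    have h2 : (G t * P).trace = ∑ i, ∑ j, G t i j * P i j := by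
      simp only [Matrix.trace, Matrix.diag, Matrix.mul_apply]
      exact Finset.sum_congr rfl fun i _ => Finset.sum_congr rfl fun j _ => by rw [hPe j i]
    rw [h1, h2]
  -- final algebra
  have hAv : v ⬝ᵥ (A *ᵥ y) = (1/2 : ℝ) * (v ⬝ᵥ (S' t *ᵥ v)) - v ⬝ᵥ (G t *ᵥ v) := by
    rw [hA, Matrix.sub_mulVec, Matrix.smul_mulVec, ← Matrix.mulVec_mulVec,
      ← Matrix.mulVec_mulVec, ← hv, dotProduct_sub, dotProduct_smul,
      smul_eq_mul]
  have htrA : A.trace = (1/2 : ℝ) * (S' t * P).trace - (G t * P).trace := by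
    rw [hA, Matrix.trace_sub, Matrix.trace_smul, smul_eq_mul]
  rw [e1, hS1, hS2, hAv, htrA, Matrix.trace_mul_comm P (S' t),
    dotProduct_comm (μ' t) v]
  ring
end
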